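/- arXiv:2403.03189 — 3 statements merged into one kernel-verified Lean document; each statement's English description precedes it below -/
import Mathlib

section
/- Let D be a 2-((sk-s+1)k, k, 1) design with 1 < k and s ≥ 2, and let S = {R₁,…,Rₘ} be a set of pairwise compatible resolutions of D. Then m ≤ (sk-k+1)·s. -/
/-- A Steiner 2-((sk-s+1)k, k, 1) design: point set of size (s·k-s+1)·k,
blocks of size k, every pair of distinct points in exactly one block. -/
structure ArcDesign (α : Type*) [DecidableEq α] where
  s : ℕ
  k : ℕ
  X : Finset α
  B : Finset (Finset α)
  card_X : X.card = (s * k - s + 1) * k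
  blocks_sub : ∀ b ∈ B, b ⊆ X
  blocks_card : ∀ b ∈ B, b.card = k
  pair_balance : ∀ x ∈ X, ∀ y ∈ X, x ≠ y → ∃! b, b ∈ B ∧ x ∈ b ∧ y ∈ b

/-- A parallel class: blocks of the design partitioning the point set. -/
def IsParallelClass {α : Type*} [DecidableEq α] (D : ArcDesign α)
    (C : Finset (Finset α)) : Prop :=
  C ⊆ D.B ∧ (∀ x ∈ D.X, ∃! b, b ∈ C ∧ x ∈ b)

/-- A resolution: a partition of the block collection into parallel classes. -/
def IsResolution {α : Type*} [DecidableEq α] (D : ArcDesign α)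
    (R : Finset (Finset (Finset α))) : Prop :=
  (∀ C ∈ R, IsParallelClass D C) ∧ (∀ b ∈ D.B, ∃! C, C ∈ R ∧ b ∈ C)

/-- Two resolutions are compatible if they share a parallel class `C`, and any
other pair of classes, one from each resolution, has at most one common
block. -/
def Compatible {α : Type*} [DecidableEq α] (D : ArcDesign α)
    (R₁ R₂ : Finset (Finset (Finset α))) : Prop :=
  ∃ C, C ∈ R₁ ∧ C ∈ R₂ ∧
    ∀ C₁ ∈ R₁, ∀ C₂ ∈ R₂, ¬(C₁ = C ∧ C₂ = C) → (C₁ ∩ C₂).card ≤ 1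

/-!
Let `N` be the point–block incidence matrix, `r = sk + 1` the number of blocks through a point,
`𝟏` the all-ones matrix, and for a resolution `R` let `A_R` (`classMatrix`) be the 0/1 matrix
on blocks recording "same class of `R`". The columns of `P_R = r • A_R - 𝟏`
(`resolutionMatrix`) lie in `ker N`, and `N Nᵀ = (r - 1) • 1 + 𝟏` is invertible, so `ker N` has
dimension `b - v`. For `T = ∑_{R ∈ S} P_R`, Cauchy–Schwarz against the orthogonal projection
onto `ker N` gives `(tr T)² ≤ (b - v) ‖T‖²`. Here `tr T = m b (r - 1)`, `‖P_R‖² = b² (r - 1)`,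
and compatibility (two classes share at most one block, except the common class) gives
`⟪P_R, P_R'⟫ ≤ r b (r - 1)`. With `b = r n₀`, `v = n₀ k`, `n₀ = sk - s + 1`, the inequality
becomes `(k - 1) (m - s (sk - k + 1)) ≤ 0`.
-/

open Finset Matrix

local notation "𝟏" => Matrix.of fun _ _ => (1 : ℝ)

theorem Finset.card_filter_eq_one_of_existsUnique {ι : Type*} {s : Finset ι} {p : ι → Prop}
    [DecidablePred p] (h : ∃! x, x ∈ s ∧ p x) : #{x ∈ s | p x} = 1 :=
  card_eq_one_iff_existsUnique.mpr (by simpa only [mem_filter] using h)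

theorem Finset.sum_sum_le_of_diag_eq_of_offDiag_le {ι R : Type*} [DecidableEq ι] [CommRing R]
    [PartialOrder R] [IsOrderedRing R] (S : Finset ι) (g : ι → ι → R) {a b : R}
    (hdiag : ∀ i ∈ S, g i i = a) (hoff : ∀ i ∈ S, ∀ j ∈ S, i ≠ j → g i j ≤ b) :
    ∑ i ∈ S, ∑ j ∈ S, g i j ≤ #S * (a + (#S - 1) * b) := by
  have hrow : ∀ i ∈ S, ∑ j ∈ S, g i j ≤ a + (#S - 1) * b := by
    intro i hi
    rw [← add_sum_erase S _ hi, hdiag i hi]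
    gcongr
    calc ∑ j ∈ S.erase i, g i j ≤ ∑ j ∈ S.erase i, b :=
          sum_le_sum fun j hj => hoff i hi j (mem_of_mem_erase hj) (ne_of_mem_erase hj).symm
      _ = (#S - 1) * b := by
          rw [sum_const, card_erase_of_mem hi, nsmul_eq_mul, Nat.cast_pred (card_pos.mpr ⟨i, hi⟩)]
  calc _ ≤ ∑ i ∈ S, (a + (#S - 1) * b) := sum_le_sum hrow
    _ = _ := by rw [sum_const, nsmul_eq_mul]

namespace Matrix

theorem trace_mul_transpose {m n R : Type*} [Fintype m] [Fintype n] [CommSemiring R]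
    (A B : Matrix m n R) : trace (A * Bᵀ) = ∑ i, ∑ j, A i j * B i j :=
  (sum_hadamard_eq A B).symm

theorem trace_sum_mul_transpose_sum {ι n R : Type*} [Fintype n] [CommSemiring R] (S : Finset ι)
    (P : ι → Matrix n n R) :
    trace ((∑ i ∈ S, P i) * (∑ i ∈ S, P i)ᵀ) = ∑ i ∈ S, ∑ j ∈ S, trace (P i * (P j)ᵀ) := by
  simp only [transpose_sum, Matrix.sum_mul, Matrix.mul_sum, trace_sum]
  exact sum_comm

theorem transpose_ones {m n : Type*} : (𝟏 : Matrix m n ℝ)ᵀ = 𝟏 := rfl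

theorem ones_mul_ones {l m n : Type*} [Fintype m] :
    (𝟏 : Matrix l m ℝ) * (𝟏 : Matrix m n ℝ) = (Fintype.card m : ℝ) • 𝟏 := by
  ext; simp [mul_apply]

theorem trace_ones {n : Type*} [Fintype n] : trace (𝟏 : Matrix n n ℝ) = Fintype.card n := by
  simp [trace]

theorem posSemidef_ones {n : Type*} [Fintype n] : (𝟏 : Matrix n n ℝ).PosSemidef := by
  convert posSemidef_vecMulVec_self_star (1 : n → ℝ) using 1
  ext; simp

variable {m n 𝕜 : Type*} [Fintype m] [Fintype n] [Field 𝕜] [LinearOrder 𝕜] [IsStrictOrderedRing 𝕜]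

theorem sq_trace_mul_transpose_le (A B : Matrix m n 𝕜) :
    trace (A * Bᵀ) ^ 2 ≤ trace (A * Aᵀ) * trace (B * Bᵀ) := by
  simp only [trace_mul_transpose, ← Fintype.sum_prod_type', ← sq]
  exact sum_mul_sq_le_sq_mul_sq _ _ _

variable [DecidableEq m] [DecidableEq n]

theorem sq_trace_le_of_mul_eq_zero {N : Matrix m n 𝕜} (hN : IsUnit (N * Nᵀ)) {T : Matrix n n 𝕜}
    (hT : N * T = 0) : trace T ^ 2 ≤ trace (T * Tᵀ) * (Fintype.card n - Fintype.card m) := by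
  have hdet : IsUnit (N * Nᵀ).det := (isUnit_iff_isUnit_det _).mp hN
  -- the orthogonal projection onto the kernel of `N`
  set P : Matrix n n 𝕜 := 1 - Nᵀ * (N * Nᵀ)⁻¹ * N with hP
  have hPT : Pᵀ = P := by
    rw [hP, transpose_sub, transpose_one, transpose_mul, transpose_mul, transpose_transpose,
      transpose_nonsing_inv, transpose_mul, transpose_transpose, Matrix.mul_assoc]
  have hPP : P * P = P := by
    have : Nᵀ * (N * Nᵀ)⁻¹ * N * (Nᵀ * (N * Nᵀ)⁻¹ * N) = Nᵀ * (N * Nᵀ)⁻¹ * N := by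
      calc _ = Nᵀ * ((N * Nᵀ)⁻¹ * (N * Nᵀ)) * (N * Nᵀ)⁻¹ * N := by simp only [Matrix.mul_assoc]
        _ = _ := by rw [nonsing_inv_mul _ hdet, Matrix.mul_one]
    rw [hP, sub_mul, mul_sub, mul_sub, this]
    simp
  have htrP : trace P = Fintype.card n - Fintype.card m := by
    rw [hP, trace_sub, trace_one, Matrix.mul_assoc, trace_mul_comm, Matrix.mul_assoc,
      nonsing_inv_mul _ hdet, trace_one]
  have hPTT : P * T = T := by
    rw [hP, sub_mul, Matrix.mul_assoc, hT, Matrix.mul_zero, sub_zero, Matrix.one_mul]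
  calc trace T ^ 2 = trace (T * Pᵀ) ^ 2 := by rw [hPT, trace_mul_comm, hPTT]
    _ ≤ trace (T * Tᵀ) * trace (P * Pᵀ) := sq_trace_mul_transpose_le T P
    _ = _ := by rw [hPT, hPP, htrP]

end Matrix

namespace ArcDesign
variable {α : Type*} [DecidableEq α] (D : ArcDesign α)

def replication : ℕ := D.s * D.k + 1

def classSize : ℕ := D.s * D.k - D.s + 1

theorem filter_mem_eq {e : Finset α} (he : e ∈ D.B) : {x ∈ D.X | x ∈ e} = e := by
  ext x
  simp only [mem_filter]
  exact ⟨And.right, fun h => ⟨D.blocks_sub e he h, h⟩⟩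

theorem card_blocks_through_pair {x y : α} (hx : x ∈ D.X) (hy : y ∈ D.X) (hxy : x ≠ y) :
    #{e ∈ D.B | x ∈ e ∧ y ∈ e} = 1 :=
  card_filter_eq_one_of_existsUnique (D.pair_balance x hx y hy hxy)

theorem card_blocks_through_mul {x : α} (hx : x ∈ D.X) :
    #{e ∈ D.B | x ∈ e} * (D.k - 1) = #D.X - 1 := by
  have h := sum_card_bipartiteAbove_eq_sum_card_bipartiteBelow
    (s := D.X.erase x) (t := {e ∈ D.B | x ∈ e}) (r := fun y e => y ∈ e)
  have habove : ∀ y ∈ D.X.erase x,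
      #(bipartiteAbove (fun y e => y ∈ e) {e ∈ D.B | x ∈ e} y) = 1 := by
    intro y hy
    obtain ⟨hyx, hyX⟩ := mem_erase.mp hy
    simpa only [bipartiteAbove, filter_filter, and_assoc] using
      D.card_blocks_through_pair hx hyX (Ne.symm hyx)
  have hbelow : ∀ e ∈ {e ∈ D.B | x ∈ e},
      #(bipartiteBelow (fun y e => y ∈ e) (D.X.erase x) e) = D.k - 1 := by
    intro e he
    obtain ⟨heB, hxe⟩ := mem_filter.mp he
    rw [bipartiteBelow, filter_erase, D.filter_mem_eq heB, card_erase_of_mem hxe,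
      D.blocks_card e heB]
  rw [sum_congr rfl habove, sum_congr rfl hbelow, sum_const, sum_const,
    card_erase_of_mem hx] at h
  simpa [mul_comm] using h.symm

theorem card_blocks_through (hk : 1 < D.k) {x : α} (hx : x ∈ D.X) :
    #{e ∈ D.B | x ∈ e} = D.replication := by
  have h := D.card_blocks_through_mul hx
  obtain ⟨j, hj⟩ : ∃ j, D.k = j + 1 := ⟨D.k - 1, by omega⟩
  have hsub : D.s * (j + 1) - D.s = D.s * j := by rw [mul_add, mul_one, Nat.add_sub_cancel]
  rw [D.card_X, hj, hsub, add_tsub_cancel_right] at h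
  rw [replication, hj]
  refine Nat.eq_of_mul_eq_mul_right (show 0 < j by omega) ?_
  rw [h]
  ring_nf
  omega

theorem card_blocks (hk : 1 < D.k) : #D.B = D.replication * D.classSize := by
  have h := sum_card_bipartiteAbove_eq_sum_card_bipartiteBelow
    (s := D.X) (t := D.B) (r := fun x e => x ∈ e)
  simp only [bipartiteAbove, bipartiteBelow] at h
  rw [sum_congr rfl fun x hx => D.card_blocks_through hk hx,
    sum_congr rfl fun e he => (congrArg card (D.filter_mem_eq he)).trans (D.blocks_card e he),
    sum_const, sum_const, smul_eq_mul, smul_eq_mul, D.card_X] at h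
  refine Nat.eq_of_mul_eq_mul_right (show 0 < D.k by omega) ?_
  rw [← h, classSize]
  ring

theorem card_blocks_cast (hk : 1 < D.k) : (#D.B : ℝ) = D.replication * D.classSize := by
  exact_mod_cast D.card_blocks hk

theorem card_X_cast : (#D.X : ℝ) = D.classSize * D.k := by
  exact_mod_cast D.card_X

theorem replication_cast : (D.replication : ℝ) = D.s * D.k + 1 := by
  push_cast [replication]; rfl

theorem classSize_cast (hk : 0 < D.k) : (D.classSize : ℝ) = D.s * D.k - D.s + 1 := by
  rw [classSize, Nat.cast_add, Nat.cast_sub (Nat.le_mul_of_pos_right _ hk)]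
  push_cast; rfl

end ArcDesign

section Resolutions
variable {α : Type*} [DecidableEq α] {D : ArcDesign α}

theorem IsParallelClass.card_eq (hk : 0 < D.k) {C : Finset (Finset α)}
    (hC : IsParallelClass D C) : #C = D.classSize := by
  have h := sum_card_bipartiteAbove_eq_sum_card_bipartiteBelow
    (s := D.X) (t := C) (r := fun x e => x ∈ e)
  simp only [bipartiteAbove, bipartiteBelow] at h
  rw [sum_congr rfl fun x hx => card_filter_eq_one_of_existsUnique (hC.2 x hx),
    sum_congr rfl fun e he => (congrArg card (D.filter_mem_eq (hC.1 he))).trans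
      (D.blocks_card e (hC.1 he)),
    sum_const, sum_const, smul_eq_mul, smul_eq_mul, D.card_X] at h
  exact Nat.eq_of_mul_eq_mul_right hk (by rw [← h, ArcDesign.classSize]; ring)

variable {R : Finset (Finset (Finset α))}

theorem IsResolution.exists_mem (hR : IsResolution D R) {e : Finset α} (he : e ∈ D.B) :
    ∃ C ∈ R, e ∈ C :=
  (hR.2 e he).exists

theorem IsResolution.eq_of_mem (hR : IsResolution D R) {C₁ C₂ : Finset (Finset α)}
    {e : Finset α} (hC₁ : C₁ ∈ R) (hC₂ : C₂ ∈ R) (he₁ : e ∈ C₁) (he₂ : e ∈ C₂) : C₁ = C₂ :=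
  (hR.2 e ((hR.1 C₁ hC₁).1 he₁)).unique ⟨hC₁, he₁⟩ ⟨hC₂, he₂⟩

theorem IsResolution.exists_mem_iff (hR : IsResolution D R) {C : Finset (Finset α)}
    {e : Finset α} (hC : C ∈ R) (he : e ∈ C) (f : Finset α) :
    (∃ C' ∈ R, e ∈ C' ∧ f ∈ C') ↔ f ∈ C :=
  ⟨fun ⟨_, hC', he', hf'⟩ => hR.eq_of_mem hC' hC he' he ▸ hf', fun hf => ⟨C, hC, he, hf⟩⟩

end Resolutions

namespace ArcDesign
variable {α : Type*} [DecidableEq α] (D : ArcDesign α)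

noncomputable def incidence : Matrix D.X D.B ℝ :=
  of fun x e => if (x : α) ∈ (e : Finset α) then 1 else 0

theorem incidence_mul_transpose (hk : 1 < D.k) :
    D.incidence * D.incidenceᵀ = (D.s * D.k : ℝ) • 1 + 𝟏 := by
  ext x y
  simp only [incidence, mul_apply, transpose_apply, of_apply, ite_mul, one_mul, zero_mul,
    ← ite_and]
  rw [sum_coe_sort D.B fun e => if (x : α) ∈ e ∧ (y : α) ∈ e then (1 : ℝ) else 0, sum_boole,
    Matrix.add_apply, Matrix.smul_apply, one_apply, of_apply]
  by_cases hxy : x = y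
  · subst hxy
    simp only [and_self, D.card_blocks_through hk x.2, if_true, replication_cast]
    ring
  · rw [D.card_blocks_through_pair x.2 y.2 (Subtype.coe_ne_coe.mpr hxy), if_neg hxy]
    simp

theorem isUnit_incidence_mul_transpose (hk : 1 < D.k) (hs : 0 < D.s) :
    IsUnit (D.incidence * D.incidenceᵀ) := by
  rw [D.incidence_mul_transpose hk]
  exact ((PosDef.one.smul (by positivity)).add_posSemidef posSemidef_ones).isUnit

theorem incidence_mul_ones (hk : 1 < D.k) :
    D.incidence * (𝟏 : Matrix D.B D.B ℝ) = (D.replication : ℝ) • 𝟏 := by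
  ext x f
  simp only [incidence, mul_apply, of_apply, mul_one, Matrix.smul_apply, smul_eq_mul]
  rw [sum_coe_sort D.B fun e => if (x : α) ∈ e then (1 : ℝ) else 0, sum_boole,
    D.card_blocks_through hk x.2]

noncomputable def classMatrix (R : Finset (Finset (Finset α))) : Matrix D.B D.B ℝ :=
  of fun e f => if ∃ C ∈ R, (e : Finset α) ∈ C ∧ (f : Finset α) ∈ C then 1 else 0

noncomputable def resolutionMatrix (R : Finset (Finset (Finset α))) : Matrix D.B D.B ℝ :=
  (D.replication : ℝ) • D.classMatrix R - 𝟏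

variable {D} {R R' : Finset (Finset (Finset α))}

theorem classMatrix_transpose : (D.classMatrix R)ᵀ = D.classMatrix R := by
  ext e f
  simp only [classMatrix, transpose_apply, of_apply]
  simp_rw [@and_comm ((f : Finset α) ∈ _)]

theorem classMatrix_apply (hR : IsResolution D R) {C : Finset (Finset α)} (hC : C ∈ R)
    {e : D.B} (he : (e : Finset α) ∈ C) (f : D.B) :
    D.classMatrix R e f = if (f : Finset α) ∈ C then 1 else 0 := by
  simp only [classMatrix, of_apply, hR.exists_mem_iff hC he]

theorem sum_classMatrix_mul_classMatrix (hR : IsResolution D R) (hR' : IsResolution D R')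
    {C C' : Finset (Finset α)} (hC : C ∈ R) (hC' : C' ∈ R') {e : D.B}
    (he : (e : Finset α) ∈ C) (he' : (e : Finset α) ∈ C') :
    ∑ f, D.classMatrix R e f * D.classMatrix R' e f = #(C ∩ C') := by
  simp only [classMatrix_apply hR hC he, classMatrix_apply hR' hC' he', ite_mul, one_mul,
    zero_mul, ← ite_and]
  rw [sum_coe_sort D.B fun f => if f ∈ C ∧ f ∈ C' then (1 : ℝ) else 0, sum_boole]
  congr 2
  ext f
  simp only [mem_filter, mem_inter, and_iff_right_iff_imp, and_imp]
  exact fun hf _ => (hR.1 C hC).1 hf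

theorem classMatrix_mul_ones (hk : 0 < D.k) (hR : IsResolution D R) :
    D.classMatrix R * 𝟏 = (D.classSize : ℝ) • 𝟏 := by
  ext e j
  obtain ⟨C, hC, he⟩ := hR.exists_mem e.2
  simp only [mul_apply, of_apply, mul_one, classMatrix_apply hR hC he, Matrix.smul_apply,
    smul_eq_mul]
  rw [sum_coe_sort D.B fun f => if f ∈ C then (1 : ℝ) else 0, sum_boole,
    filter_mem_eq_inter, inter_eq_right.mpr (hR.1 C hC).1, (hR.1 C hC).card_eq hk]

theorem ones_mul_classMatrix (hk : 0 < D.k) (hR : IsResolution D R) :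
    𝟏 * D.classMatrix R = (D.classSize : ℝ) • 𝟏 := by
  rw [← classMatrix_transpose, ← transpose_transpose (𝟏 * _), transpose_mul, transpose_transpose,
    transpose_ones, classMatrix_mul_ones hk hR, transpose_smul, transpose_ones]

theorem incidence_mul_classMatrix (hR : IsResolution D R) :
    D.incidence * D.classMatrix R = 𝟏 := by
  rw [← classMatrix_transpose]
  ext x f
  obtain ⟨C, hC, hf⟩ := hR.exists_mem f.2
  simp only [incidence, mul_apply, of_apply, transpose_apply, classMatrix_apply hR hC hf, ite_mul,
    one_mul, zero_mul, ← ite_and]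
  have hfilter : {e ∈ D.B | (x : α) ∈ e ∧ e ∈ C} = {e ∈ C | (x : α) ∈ e} := by
    ext e
    simp only [mem_filter]
    exact ⟨fun h => ⟨h.2.2, h.2.1⟩, fun h => ⟨(hR.1 C hC).1 h.1, h.2, h.1⟩⟩
  rw [sum_coe_sort D.B fun e => if (x : α) ∈ e ∧ e ∈ C then (1 : ℝ) else 0, sum_boole, hfilter,
    card_filter_eq_one_of_existsUnique ((hR.1 C hC).2 x x.2), Nat.cast_one]

theorem trace_classMatrix (hR : IsResolution D R) : trace (D.classMatrix R) = #D.B := by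
  have hdiag : ∀ e, D.classMatrix R e e = 1 := fun e => by
    obtain ⟨C, hC, he⟩ := hR.exists_mem e.2
    rw [classMatrix_apply hR hC he, if_pos he]
  simp [trace, hdiag]

theorem trace_classMatrix_mul_transpose_self (hk : 0 < D.k) (hR : IsResolution D R) :
    trace (D.classMatrix R * (D.classMatrix R)ᵀ) = #D.B * D.classSize := by
  have hrow : ∀ e, ∑ f, D.classMatrix R e f * D.classMatrix R e f = D.classSize := fun e => by
    obtain ⟨C, hC, he⟩ := hR.exists_mem e.2
    rw [sum_classMatrix_mul_classMatrix hR hR hC hC he he, inter_self, (hR.1 C hC).card_eq hk]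
  simp only [trace_mul_transpose, hrow, sum_const, card_univ, Fintype.card_coe, nsmul_eq_mul]

theorem trace_classMatrix_mul_transpose_le (hk : 0 < D.k) (hR : IsResolution D R)
    (hR' : IsResolution D R') (hRR' : Compatible D R R') :
    trace (D.classMatrix R * (D.classMatrix R')ᵀ) ≤ #D.B + D.classSize * (D.classSize - 1) := by
  obtain ⟨C₀, hC₀, hC₀', hmeet⟩ := hRR'
  have hrow : ∀ e : D.B, ∑ f, D.classMatrix R e f * D.classMatrix R' e f ≤
      1 + if (e : Finset α) ∈ C₀ then (D.classSize - 1 : ℝ) else 0 := fun e => by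
    obtain ⟨C, hC, he⟩ := hR.exists_mem e.2
    obtain ⟨C', hC', he'⟩ := hR'.exists_mem e.2
    rw [sum_classMatrix_mul_classMatrix hR hR' hC hC' he he']
    split_ifs with he₀
    · rw [hR.eq_of_mem hC hC₀ he he₀, hR'.eq_of_mem hC' hC₀' he' he₀, inter_self,
        (hR.1 C₀ hC₀).card_eq hk]
      linarith
    · have hCC₀ : C ≠ C₀ := fun h => he₀ (h ▸ he)
      exact_mod_cast (hmeet C hC C' hC' fun h => hCC₀ h.1).trans (by simp)
  calc trace (D.classMatrix R * (D.classMatrix R')ᵀ)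
      ≤ ∑ e : D.B, (1 + if (e : Finset α) ∈ C₀ then (D.classSize - 1 : ℝ) else 0) := by
        rw [trace_mul_transpose]; exact sum_le_sum fun e _ => hrow e
    _ = #D.B + D.classSize * (D.classSize - 1) := by
        rw [sum_add_distrib, sum_coe_sort D.B fun e => if e ∈ C₀ then (D.classSize - 1 : ℝ) else 0,
          sum_ite_mem, inter_eq_right.mpr (hR.1 C₀ hC₀).1, sum_const, sum_const,
          (hR.1 C₀ hC₀).card_eq hk, card_univ, Fintype.card_coe, nsmul_eq_mul, nsmul_eq_mul,
          mul_one]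

theorem incidence_mul_resolutionMatrix (hk : 1 < D.k) (hR : IsResolution D R) :
    D.incidence * D.resolutionMatrix R = 0 := by
  rw [resolutionMatrix, Matrix.mul_sub, Matrix.mul_smul, incidence_mul_classMatrix hR,
    D.incidence_mul_ones hk, sub_self]

theorem trace_resolutionMatrix (hR : IsResolution D R) :
    trace (D.resolutionMatrix R) = #D.B * (D.replication - 1) := by
  rw [resolutionMatrix, trace_sub, trace_smul, trace_classMatrix hR, trace_ones, Fintype.card_coe,
    smul_eq_mul]
  ring

theorem trace_resolutionMatrix_mul_transpose (hk : 1 < D.k) (hR : IsResolution D R)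
    (hR' : IsResolution D R') :
    trace (D.resolutionMatrix R * (D.resolutionMatrix R')ᵀ) =
      D.replication ^ 2 * trace (D.classMatrix R * (D.classMatrix R')ᵀ) - #D.B ^ 2 := by
  have hk0 : 0 < D.k := by omega
  simp only [resolutionMatrix, transpose_sub, transpose_smul, transpose_ones, classMatrix_transpose,
    sub_mul, mul_sub, Matrix.smul_mul, Matrix.mul_smul, classMatrix_mul_ones hk0 hR,
    ones_mul_classMatrix hk0 hR', ones_mul_ones, trace_sub, trace_smul, smul_eq_mul, trace_ones,
    Fintype.card_coe, D.card_blocks_cast hk]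
  ring

theorem trace_resolutionMatrix_mul_transpose_self (hk : 1 < D.k) (hR : IsResolution D R) :
    trace (D.resolutionMatrix R * (D.resolutionMatrix R)ᵀ) = #D.B ^ 2 * (D.replication - 1) := by
  rw [trace_resolutionMatrix_mul_transpose hk hR hR,
    trace_classMatrix_mul_transpose_self (by omega) hR, D.card_blocks_cast hk]
  ring

theorem trace_resolutionMatrix_mul_transpose_le (hk : 1 < D.k) (hR : IsResolution D R)
    (hR' : IsResolution D R') (hRR' : Compatible D R R') :
    trace (D.resolutionMatrix R * (D.resolutionMatrix R')ᵀ) ≤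
      D.replication * #D.B * (D.replication - 1) := by
  have h := trace_classMatrix_mul_transpose_le (by omega) hR hR' hRR'
  rw [trace_resolutionMatrix_mul_transpose hk hR hR']
  rw [D.card_blocks_cast hk] at h ⊢
  calc _ ≤ (D.replication : ℝ) ^ 2 * (D.replication * D.classSize + D.classSize * (D.classSize - 1))
        - (D.replication * D.classSize) ^ 2 := by gcongr
    _ = _ := by ring

end ArcDesign

/-- `τ` plays the role of `‖T‖²`, bounded above by compatibility (`hτ`) and below by
Cauchy–Schwarz (`hCS`). -/
theorem le_of_sq_trace_le {s k m r n τ : ℝ} (hs : 1 ≤ s) (hk : 1 < k) (hm : 0 ≤ m)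
    (hr : r = s * k + 1) (hn : n = s * k - s + 1)
    (hτ : τ ≤ m * ((r * n) ^ 2 * (r - 1) + (m - 1) * (r * (r * n) * (r - 1))))
    (hCS : (m * (r * n * (r - 1))) ^ 2 ≤ τ * (r * n - n * k)) :
    m ≤ (s * k - k + 1) * s := by
  subst hr hn
  have hn : 0 < s * k - s + 1 := by nlinarith
  have hq : 0 < s * k - k + 1 := by nlinarith
  have h := hCS.trans (mul_le_mul_of_nonneg_right hτ (by nlinarith))
  have hfac : m * ((s * k + 1) * (s * k - s + 1)) ^ 2 * (s * k) * (k - 1) *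
      (m - (s * k - k + 1) * s) ≤ 0 := by
    linear_combination h
  rcases hm.eq_or_lt with rfl | hm
  · exact mul_nonneg hq.le (by linarith)
  · have hpos : 0 < m * ((s * k + 1) * (s * k - s + 1)) ^ 2 * (s * k) * (k - 1) := by
      have : 0 < s * k := by nlinarith
      have : 0 < k - 1 := by linarith
      positivity
    linarith [nonpos_of_mul_nonpos_right hfac hpos]

/-- A set of pairwise compatible resolutions of a 2-((sk-s+1)k, k, 1) design
(1 < k, s ≥ 2) has at most (sk-k+1)·s elements. -/
theorem compatible_resolutions_bound {α : Type*} [DecidableEq α]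
    (D : ArcDesign α) (hk : 1 < D.k) (hs : 2 ≤ D.s)
    (S : Finset (Finset (Finset (Finset α))))
    (hres : ∀ R ∈ S, IsResolution D R)
    (hcomp : ∀ R₁ ∈ S, ∀ R₂ ∈ S, R₁ ≠ R₂ → Compatible D R₁ R₂) :
    S.card ≤ (D.s * D.k - D.k + 1) * D.s := by
  set T := ∑ R ∈ S, D.resolutionMatrix R
  have hNT : D.incidence * T = 0 := by
    rw [Matrix.mul_sum]
    exact sum_eq_zero fun R hR => D.incidence_mul_resolutionMatrix hk (hres R hR)
  have hCS := sq_trace_le_of_mul_eq_zero (D.isUnit_incidence_mul_transpose hk (by omega)) hNT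
  have htrace : trace T = #S * (#D.B * (D.replication - 1)) := by
    rw [trace_sum, sum_congr rfl fun R hR => D.trace_resolutionMatrix (hres R hR), sum_const,
      nsmul_eq_mul]
  have hnorm : trace (T * Tᵀ) ≤ #S * (#D.B ^ 2 * (D.replication - 1) +
      (#S - 1) * (D.replication * #D.B * (D.replication - 1))) := by
    rw [trace_sum_mul_transpose_sum]
    exact sum_sum_le_of_diag_eq_of_offDiag_le S _
      (fun R hR => D.trace_resolutionMatrix_mul_transpose_self hk (hres R hR))
      (fun R hR R' hR' hne => D.trace_resolutionMatrix_mul_transpose_le hk (hres R hR)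
        (hres R' hR') (hcomp R hR R' hR' hne))
  rw [htrace, Fintype.card_coe, Fintype.card_coe, D.card_blocks_cast hk, D.card_X_cast] at hCS
  rw [D.card_blocks_cast hk] at hnorm
  have hbound := le_of_sq_trace_le (by exact_mod_cast (by omega : 1 ≤ D.s))
    (by exact_mod_cast hk) (Nat.cast_nonneg _) D.replication_cast (D.classSize_cast (by omega))
    hnorm hCS
  have hcast : (((D.s * D.k - D.k + 1) * D.s : ℕ) : ℝ) = (D.s * D.k - D.k + 1) * D.s := by
    push_cast [Nat.cast_sub (Nat.le_mul_of_pos_left D.k (by omega : 0 < D.s))]; rfl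
  exact_mod_cast hbound.trans_eq hcast.symm
end

section
/- In the Desarguesian projective plane PG(2, 2^m), for every i with 1 ≤ i < m there exists a maximal arc of degree k = 2^i, i.e., a set of (2^m - 2^{m-i} + 1)·2^i points meeting every line in exactly 2^i or 0 points. -/
/-!
Denniston's construction. Over `K = GF(2^m)` choose `b` with `t² + bt + 1` irreducible, so that
`Q(x, y) = x² + bxy + y²` vanishes only at `0`, and an additive subgroup `H ≤ K` of order `2^i`.
The arc consists of the affine points `(x : y : 1)` with `Q(x, y) ∈ H`. Since `Q(r • s) = r² Q(s)`
and squaring is bijective, every nonzero value of `Q` is taken equally often, hence `q + 1` times;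
this gives the size of the arc.

The line at infinity misses the arc. On an affine line `p + t d`, in characteristic two,
`Q(p + t d) = Q(d) t² + β t + Q(p)`. If `β = 0` this is a bijection in `t`, so the line meets the
arc in `|H|` points. Otherwise `ψ t = Q(d) t² + β t` is additive with kernel `{0, β / Q(d)}`, and
`Q(p) ∉ im ψ` by anisotropy. The points on the line are then either none or a coset of `ψ⁻¹(H)`;
in the latter case `H ⊄ im ψ`, and since `im ψ` has index two, `|ψ⁻¹(H)| = 2 |H ∩ im ψ| = |H|`.
-/

open Projectivization Module

theorem Set.ncard_preimage_eq_mul {α β : Type*} [Finite α] {f : α → β} {T : Set β}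
    (hT : T.Finite) {n : ℕ} (hf : ∀ y ∈ T, (f ⁻¹' {y}).ncard = n) :
    (f ⁻¹' T).ncard = T.ncard * n := by
  induction T, hT using Set.Finite.induction_on with
  | empty => simp
  | @insert y T hy hT ih =>
    rw [← Set.singleton_union, Set.preimage_union,
      Set.ncard_union_eq (Set.disjoint_singleton_left.2 hy |>.preimage f),
      ih fun z hz ↦ hf z (by simp [hz]), hf y (by simp),
      Set.ncard_union_eq (Set.disjoint_singleton_left.2 hy) (Set.finite_singleton y) hT,
      Set.ncard_singleton]
    ring

theorem Nat.one_add_pow_sub_one_mul_pow_add_one {a i m : ℕ} (ha : 0 < a) (hi : i ≤ m) :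
    1 + (a ^ i - 1) * (a ^ m + 1) = (a ^ m - a ^ (m - i) + 1) * a ^ i := by
  obtain ⟨k, rfl⟩ := Nat.exists_eq_add_of_le hi
  rw [Nat.add_sub_cancel_left]
  have h₁ : 1 ≤ a ^ i := Nat.one_le_pow _ _ ha
  have h₂ : a ^ k ≤ a ^ (i + k) := Nat.pow_le_pow_right ha (by omega)
  zify [h₁, h₂]
  ring

namespace AddSubgroup

variable {G G' : Type*} [AddGroup G] [AddGroup G']

theorem card_comap_eq_card_ker_mul (ψ : G →+ G') (H : AddSubgroup G') :
    Nat.card (H.comap ψ) = Nat.card ψ.ker * Nat.card (ψ.range ⊓ H : AddSubgroup G') := by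
  rw [← relIndex_bot_left, ← relIndex_mul_relIndex ⊥ ψ.ker _ bot_le (ψ.ker_le_comap H),
    relIndex_bot_left, relIndex_ker, map_comap_eq]

theorem two_mul_card_inf_of_index_eq_two {A : Type*} [AddCommGroup A] {V H : AddSubgroup A}
    (hV : V.index = 2) (hH : ¬H ≤ V) : 2 * Nat.card (V ⊓ H : AddSubgroup A) = Nat.card H := by
  have hrel : V.relIndex H = 2 := by
    have := relIndex_dvd_index_of_normal V H
    rw [hV, Nat.dvd_prime Nat.prime_two] at this
    exact this.resolve_left (mt relIndex_eq_one.1 hH)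
  rw [← relIndex_bot_left H, ← relIndex_mul_relIndex ⊥ (V ⊓ H) H bot_le inf_le_right,
    relIndex_bot_left, inf_relIndex_right, hrel, mul_comm]

theorem index_range_eq_card_ker [Finite G] (ψ : G →+ G) : ψ.range.index = Nat.card ψ.ker := by
  have h1 := card_mul_index ψ.ker
  have h2 := card_mul_index ψ.range
  rw [index_ker] at h1
  have : 0 < Nat.card ψ.range := Nat.card_pos
  nlinarith

theorem exists_card_eq_prime_pow [Finite G] (p : ℕ) {n : ℕ}
    [Fact p.Prime] (hdvd : p ^ n ∣ Nat.card G) : ∃ H : AddSubgroup G, Nat.card H = p ^ n := by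
  obtain ⟨H, hH⟩ := Sylow.exists_subgroup_card_pow_prime (G := Multiplicative G) p hdvd
  exact ⟨H.toAddSubgroup', hH⟩

theorem ncard_setOf_add_mem_eq_zero_or {A : Type*} [AddCommGroup A] [Finite A] (ψ : A →+ A)
    (hψ : Nat.card ψ.ker = 2) (H : AddSubgroup A) {γ : A} (hγ : γ ∉ ψ.range) :
    {t | ψ t + γ ∈ H}.ncard = 0 ∨ {t | ψ t + γ ∈ H}.ncard = Nat.card H := by
  rcases Set.eq_empty_or_nonempty {t | ψ t + γ ∈ H} with hempty | ⟨t₀, ht₀⟩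
  · simp [hempty]
  right
  have hcoset : {t | ψ t + γ ∈ H} = (· - t₀) ⁻¹' (H.comap ψ : Set A) := by
    ext t
    rw [Set.mem_preimage, SetLike.mem_coe, mem_comap, map_sub,
      show ψ t - ψ t₀ = ψ t + γ + -(ψ t₀ + γ) by abel,
      H.add_mem_cancel_right (H.neg_mem ht₀)]
    rfl
  have hH : ¬H ≤ ψ.range := fun hle ↦
    hγ (by simpa using sub_mem (hle ht₀) (ψ.mem_range.2 ⟨t₀, rfl⟩))
  rw [hcoset, Set.ncard_preimage_of_injective_subset_range sub_left_injective
      fun t _ ↦ ⟨t + t₀, add_sub_cancel_right t t₀⟩,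
    ← Nat.card_coe_set_eq, SetLike.coe_sort_coe, card_comap_eq_card_ker_mul, hψ,
    two_mul_card_inf_of_index_eq_two ((index_range_eq_card_ker ψ).trans hψ) hH]

end AddSubgroup

section
variable {K : Type*} [Field K]

def quadForm (b : K) (s : K × K) : K := s.1 ^ 2 + b * s.1 * s.2 + s.2 ^ 2

theorem quadForm_smul (b r : K) (s : K × K) : quadForm b (r • s) = r ^ 2 * quadForm b s := by
  simp only [quadForm, Prod.smul_fst, Prod.smul_snd, smul_eq_mul]
  ring

theorem quadForm_eq_zero_iff {b : K} (hb : ∀ t, t ^ 2 + b * t + 1 ≠ 0) {s : K × K} :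
    quadForm b s = 0 ↔ s = 0 := by
  refine ⟨fun h ↦ ?_, fun h ↦ by simp [h, quadForm]⟩
  by_cases hs₂ : s.2 = 0
  · simpa [quadForm, hs₂, Prod.ext_iff] using h
  · refine absurd ?_ (hb (s.1 / s.2))
    rw [show (s.1 / s.2) ^ 2 + b * (s.1 / s.2) + 1 = quadForm b s / s.2 ^ 2 by
      rw [quadForm]; field_simp, h, zero_div]

variable [CharP K 2]

theorem quadForm_add_smul (b t : K) (p d : K × K) :
    quadForm b (p + t • d) =
      quadForm b d * t ^ 2 + b * (p.1 * d.2 + p.2 * d.1) * t + quadForm b p := by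
  simp only [quadForm, Prod.fst_add, Prod.snd_add, Prod.smul_fst, Prod.smul_snd, smul_eq_mul]
  linear_combination (p.1 * t * d.1 + p.2 * t * d.2) * CharTwo.two_eq_zero (R := K)

theorem exists_forall_sq_add_mul_add_one_ne_zero [Finite K] :
    ∃ b : K, ∀ t, t ^ 2 + b * t + 1 ≠ 0 := by
  have hnotinj : ¬(fun t : K ↦ t ^ 2 + t).Injective := fun h ↦
    zero_ne_one <| h (by simp [CharTwo.add_self_eq_zero] : (0 : K) ^ 2 + 0 = 1 ^ 2 + 1)
  obtain ⟨c, hc⟩ := not_forall.1 (mt Finite.injective_iff_surjective.2 hnotinj)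
  have hc0 : c ≠ 0 := fun h ↦ hc ⟨0, by simp [h]⟩
  obtain ⟨b, hb⟩ := (bijective_frobenius K 2).2 c⁻¹
  rw [frobenius_def] at hb
  have hb0 : b ≠ 0 := by rintro rfl; simp at hb; exact hc0 hb.symm
  refine ⟨b, fun t ht ↦ hc ⟨t / b, ?_⟩⟩
  rw [show c = (b ^ 2)⁻¹ by rw [hb, inv_inv]]
  field_simp
  linear_combination ht - CharTwo.two_eq_zero (R := K)

variable [Finite K] {b : K}

theorem ncard_quadForm_preimage_singleton_eq {μ : K} (hμ : μ ≠ 0) :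
    (quadForm b ⁻¹' {μ}).ncard = (quadForm b ⁻¹' {1}).ncard := by
  obtain ⟨r, hr⟩ := (bijective_frobenius K 2).2 μ
  rw [frobenius_def] at hr
  have hr0 : r ≠ 0 := by rintro rfl; simp [eq_comm, hμ] at hr
  have hscale : (r • ·) ⁻¹' (quadForm b ⁻¹' {μ}) = quadForm b ⁻¹' {1} := by
    ext s
    simp [quadForm_smul, hr, hμ]
  rw [← hscale, Set.ncard_preimage_of_injective_subset_range (smul_right_injective _ hr0)
    fun s _ ↦ ⟨r⁻¹ • s, smul_inv_smul₀ hr0 s⟩]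

theorem ncard_quadForm_preimage (hb : ∀ t, t ^ 2 + b * t + 1 ≠ 0) {T : Set K} (hT : 0 ∈ T) :
    (quadForm b ⁻¹' T).ncard = 1 + (T.ncard - 1) * (quadForm b ⁻¹' {1}).ncard := by
  have hzero : quadForm b ⁻¹' {0} = {0} := by
    ext s
    simp [quadForm_eq_zero_iff hb]
  calc (quadForm b ⁻¹' T).ncard
      = (quadForm b ⁻¹' (T \ {0})).ncard + (quadForm b ⁻¹' {0}).ncard := by
        rw [Set.preimage_sdiff, Set.ncard_sdiff_add_ncard_of_subset
          (Set.preimage_mono (Set.singleton_subset_iff.2 hT))]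
    _ = (T \ {0}).ncard * (quadForm b ⁻¹' {1}).ncard + 1 := by
        rw [Set.ncard_preimage_eq_mul (Set.toFinite _)
          fun μ hμ ↦ ncard_quadForm_preimage_singleton_eq hμ.2, hzero, Set.ncard_singleton]
    _ = _ := by
        rw [Set.ncard_sdiff_singleton_of_mem hT]
        ring

theorem ncard_quadForm_preimage_one (hb : ∀ t, t ^ 2 + b * t + 1 ≠ 0) :
    (quadForm b ⁻¹' {1}).ncard = Nat.card K + 1 := by
  have h := ncard_quadForm_preimage hb (Set.mem_univ 0)
  rw [Set.preimage_univ, Set.ncard_univ, Set.ncard_univ, Nat.card_prod] at h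
  obtain ⟨q, hq⟩ : ∃ q, Nat.card K = q + 2 :=
    ⟨Nat.card K - 2, by have : 2 ≤ Nat.card K := Finite.one_lt_card; omega⟩
  rw [hq, show q + 2 - 1 = q + 1 by omega] at h
  have : (q + 1) * (quadForm b ⁻¹' {1}).ncard = (q + 1) * (q + 2 + 1) := by linarith
  rw [hq, Nat.eq_of_mul_eq_mul_left q.succ_pos this]

theorem ncard_setOf_quadForm_add_smul_mem (hb : ∀ t, t ^ 2 + b * t + 1 ≠ 0) (H : AddSubgroup K)
    (p : K × K) {d : K × K} (hd : d ≠ 0) :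
    {t : K | quadForm b (p + t • d) ∈ H}.ncard = 0 ∨
      {t : K | quadForm b (p + t • d) ∈ H}.ncard = Nat.card H := by
  simp_rw [quadForm_add_smul]
  set a := quadForm b d
  set β := b * (p.1 * d.2 + p.2 * d.1)
  set γ := quadForm b p
  have ha : a ≠ 0 := (quadForm_eq_zero_iff hb).not.2 hd
  by_cases hβ : β = 0
  · right
    have hbij : (fun t : K ↦ a * t ^ 2 + γ).Bijective :=
      Finite.injective_iff_bijective.1 fun s t hst ↦
        (bijective_frobenius K 2).1 (by simpa [frobenius_def, ha] using hst)
    simp only [hβ, zero_mul, add_zero]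
    rw [show {t : K | a * t ^ 2 + γ ∈ H} = (fun t ↦ a * t ^ 2 + γ) ⁻¹' H from rfl,
      Set.ncard_preimage_of_injective_subset_range hbij.1 (by simp [hbij.2.range_eq])]
    exact Nat.card_coe_set_eq _
  · let ψ : K →+ K := (AddMonoidHom.mulLeft a).comp (frobenius K 2).toAddMonoidHom +
      AddMonoidHom.mulLeft β
    have hψ (t : K) : ψ t = a * t ^ 2 + β * t := by simp [ψ, frobenius_def]
    have hker : (ψ.ker : Set K) = {0, β / a} := by
      ext t
      simp only [SetLike.mem_coe, AddMonoidHom.mem_ker, hψ, Set.mem_insert_iff,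
        Set.mem_singleton_iff]
      rw [show a * t ^ 2 + β * t = t * (a * t + β) by ring, mul_eq_zero, eq_div_iff ha,
        add_eq_zero_iff_eq_neg, CharTwo.neg_eq, mul_comm]
    have hcard : Nat.card ψ.ker = 2 := by
      rw [← SetLike.coe_sort_coe, hker, Nat.card_coe_set_eq,
        Set.ncard_pair (div_ne_zero hβ ha).symm]
    have hγ : γ ∉ ψ.range := by
      rintro ⟨t, ht⟩
      have hzero : p + t • d = 0 := by
        rw [← quadForm_eq_zero_iff hb, quadForm_add_smul, ← hψ, ht, CharTwo.add_self_eq_zero]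
      obtain ⟨h₁, h₂⟩ := Prod.ext_iff.1 hzero
      simp only [Prod.fst_add, Prod.snd_add, Prod.smul_fst, Prod.smul_snd, smul_eq_mul,
        Prod.fst_zero, Prod.snd_zero] at h₁ h₂
      apply hβ
      linear_combination
        b * d.2 * h₁ + b * d.1 * h₂ - b * t * d.1 * d.2 * CharTwo.two_eq_zero (R := K)
    simpa only [hψ] using AddSubgroup.ncard_setOf_add_mem_eq_zero_or ψ hcard H hγ
end

section
variable {K : Type*} [Field K]

def affinePoint (s : K × K) : Projectivization K (Fin 3 → K) :=
  mk K ![s.1, s.2, 1] fun h ↦ one_ne_zero (congrFun h 2)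

theorem affinePoint_injective : Function.Injective (affinePoint (K := K)) := by
  intro s t hst
  obtain ⟨r, hr⟩ := (mk_eq_mk_iff' K _ _ _ _).1 hst
  have h₀ := congrFun hr 0
  have h₁ := congrFun hr 1
  have h₂ := congrFun hr 2
  simp only [Pi.smul_apply, Matrix.cons_val, smul_eq_mul, mul_one] at h₀ h₁ h₂
  subst h₂
  simp only [one_mul] at h₀ h₁
  exact Prod.ext h₀.symm h₁.symm

theorem affinePoint_preimage_setOf_submodule_le (W : Submodule K (Fin 3 → K)) :
    affinePoint ⁻¹' {p | p.submodule ≤ W} = {s : K × K | ![s.1, s.2, 1] ∈ W} := by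
  ext s
  rw [Set.mem_preimage, Set.mem_ofPred_eq, affinePoint, submodule_mk,
    Submodule.span_singleton_le_iff_mem, Set.mem_ofPred_eq]

theorem LinearMap.exists_setOf_eq_one_eq_range_add_smul {V : Type*} [AddCommGroup V] [Module K V]
    (hV : finrank K V = 2) {φ : V →ₗ[K] K} (hφ : φ ≠ 0) :
    ∃ w d : V, d ≠ 0 ∧ φ d = 0 ∧ {x | φ x = 1} = Set.range fun t : K ↦ w + t • d := by
  have hsurj := φ.surjective_or_eq_zero.resolve_right hφ
  obtain ⟨w, hw⟩ := hsurj 1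
  have : FiniteDimensional K V := .of_finrank_pos (by omega)
  have hker : finrank K φ.ker = 1 := by
    have := φ.finrank_range_add_finrank_ker
    rw [LinearMap.range_eq_top.2 hsurj, finrank_top, finrank_self, hV] at this
    omega
  obtain ⟨⟨d, hd⟩, hd0, hspan⟩ := finrank_eq_one_iff'.1 hker
  refine ⟨w, d, by simpa using hd0, hd, Set.ext fun x ↦ ⟨fun hx ↦ ?_, ?_⟩⟩
  · obtain ⟨t, ht⟩ := hspan ⟨x - w, by simp [show φ x = 1 from hx, hw]⟩
    exact ⟨t, by simpa [eq_sub_iff_add_eq'] using congrArg Subtype.val ht⟩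
  · rintro ⟨t, rfl⟩
    simp [hw, LinearMap.mem_ker.1 hd]

theorem setOf_mem_eq_empty_or_eq_range_add_smul {W : Submodule K (Fin 3 → K)}
    (hW : finrank K W = 2) :
    {s : K × K | ![s.1, s.2, 1] ∈ W} = ∅ ∨
      ∃ p d : K × K, d ≠ 0 ∧
        {s : K × K | ![s.1, s.2, 1] ∈ W} = Set.range fun t : K ↦ p + t • d := by
  let φ : W →ₗ[K] K := (LinearMap.proj 2).comp W.subtype
  by_cases hφ : φ = 0
  · left
    exact Set.eq_empty_of_forall_notMem fun s hs ↦
      one_ne_zero (LinearMap.congr_fun hφ ⟨_, hs⟩)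
  right
  obtain ⟨w, d, hd0, hd, hline⟩ := φ.exists_setOf_eq_one_eq_range_add_smul hW hφ
  refine ⟨((w : Fin 3 → K) 0, (w : Fin 3 → K) 1), ((d : Fin 3 → K) 0, (d : Fin 3 → K) 1),
    ?_, ?_⟩
  · refine fun h ↦ hd0 (Subtype.ext (funext fun i ↦ ?_))
    fin_cases i
    exacts [congrArg Prod.fst h, congrArg Prod.snd h, hd]
  ext s
  constructor
  · intro hs
    obtain ⟨t, ht⟩ : (⟨_, hs⟩ : W) ∈ Set.range fun t : K ↦ w + t • d := hline ▸ rfl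
    refine ⟨t, Prod.ext ?_ ?_⟩
    exacts [congrFun (congrArg Subtype.val ht) 0, congrFun (congrArg Subtype.val ht) 1]
  · rintro ⟨t, rfl⟩
    have h₂ : w + t • d ∈ {x | φ x = 1} := hline.symm ▸ ⟨t, rfl⟩
    show ![_, _, 1] ∈ W
    convert (w + t • d).2 using 1
    funext i
    fin_cases i
    · simp
    · simp
    · simpa [φ] using h₂.symm
end

theorem denniston_maximal_arcs_general (m i : ℕ) (him : i < m) :
    ∃ A : Set (Projectivization (GaloisField 2 m) (Fin 3 → GaloisField 2 m)),
      A.ncard = (2 ^ m - 2 ^ (m - i) + 1) * 2 ^ i ∧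
      ∀ W : Submodule (GaloisField 2 m) (Fin 3 → GaloisField 2 m),
        Module.finrank (GaloisField 2 m) W = 2 →
        ({p ∈ A | Projectivization.submodule p ≤ W}.ncard = 2 ^ i ∨
         {p ∈ A | Projectivization.submodule p ≤ W}.ncard = 0) := by
  have hq : Nat.card (GaloisField 2 m) = 2 ^ m := GaloisField.card 2 m (by omega)
  obtain ⟨b, hb⟩ := exists_forall_sq_add_mul_add_one_ne_zero (K := GaloisField 2 m)
  obtain ⟨H, hH⟩ := AddSubgroup.exists_card_eq_prime_pow (G := GaloisField 2 m) 2
    (hq ▸ pow_dvd_pow 2 him.le)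
  refine ⟨affinePoint '' (quadForm b ⁻¹' H), ?_, fun W hW ↦ ?_⟩
  · rw [Set.ncard_image_of_injective _ affinePoint_injective,
      ncard_quadForm_preimage hb H.zero_mem, ncard_quadForm_preimage_one hb,
      ← Nat.card_coe_set_eq, SetLike.coe_sort_coe, hH, hq,
      Nat.one_add_pow_sub_one_mul_pow_add_one two_pos him.le]
  have hinter : {p ∈ affinePoint '' (quadForm b ⁻¹' H) | p.submodule ≤ W} =
      affinePoint '' (quadForm b ⁻¹' H ∩ {s | ![s.1, s.2, 1] ∈ W}) := by
    rw [← affinePoint_preimage_setOf_submodule_le, Set.image_inter_preimage]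
    rfl
  rw [hinter, Set.ncard_image_of_injective _ affinePoint_injective, ← hH]
  rcases setOf_mem_eq_empty_or_eq_range_add_smul hW with hempty | ⟨p, d, hd, hline⟩
  · simp [hempty]
  have hinj : Function.Injective fun t : GaloisField 2 m ↦ p + t • d :=
    fun s t hst ↦ smul_left_injective _ hd (add_left_cancel hst)
  rw [hline, ← Set.image_preimage_eq_inter_range, Set.ncard_image_of_injective _ hinj]
  exact (ncard_setOf_quadForm_add_smul_mem hb H p hd).symm

/-- In the Desarguesian plane PG(2, 2^m) (points: 1-dimensional subspaces,
lines: 2-dimensional subspaces of GF(2^m)³), for every 1 ≤ i < m there is a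
maximal arc of degree 2^i: a set of (2^m - 2^(m-i) + 1)·2^i points meeting
every line in exactly 2^i or 0 points. -/
theorem denniston_maximal_arcs (m i : ℕ) (hi1 : 1 ≤ i) (him : i < m) :
    ∃ A : Set (Projectivization (GaloisField 2 m) (Fin 3 → GaloisField 2 m)),
      A.ncard = (2 ^ m - 2 ^ (m - i) + 1) * 2 ^ i ∧
      ∀ W : Submodule (GaloisField 2 m) (Fin 3 → GaloisField 2 m),
        Module.finrank (GaloisField 2 m) W = 2 →
        ({p ∈ A | Projectivization.submodule p ≤ W}.ncard = 2 ^ i ∨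
         {p ∈ A | Projectivization.submodule p ≤ W}.ncard = 0) :=
  denniston_maximal_arcs_general m i him
end

section
/- Let F = {A₁, A₂, A₃, A₄} be four 4-subsets of Z₅₁ such that every element of Z₅₁ \ {0, 17, 34} is a difference of two elements of the same Aᵢ, and suppose A₁ ∪ A₂ ∪ A₃ ∪ A₄ reduces modulo 17 to Z₁₇ \ {0}. Then the design on point set Z₅₁ ∪ {∞} whose blocks are the translates modulo 51 of the blocks of the starter parallel class {0,17,34,∞} ∪ {Aᵢ + 17j : 1 ≤ i ≤ 4, 0 ≤ j ≤ 2} is a resolvable 2-(52,4,1) design admitting an automorphism of order 51 fixing ∞. -/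
/-- The point at infinity is `none`; finite points are `some x`, `x ∈ ℤ₅₁`. -/
abbrev Pt := Option (ZMod 51)

/-- The starter parallel class: the block {0,17,34,∞} together with the
blocks Aᵢ + 17j, 1 ≤ i ≤ 4, 0 ≤ j < 3. -/
def starter (A : Fin 4 → Finset (ZMod 51)) : Finset (Finset Pt) :=
  insert ({some 0, some 17, some 34, none} : Finset Pt)
    ((Finset.univ : Finset (Fin 4 × Fin 3)).image fun p =>
      (A p.1).image fun a => some (a + 17 * ((p.2 : ℕ) : ZMod 51)))

/-- The blocks of the design: all translates modulo 51 of the starter blocks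
(the translate by `t` fixes ∞ and adds `t` to each finite point). -/
def blocks (A : Fin 4 → Finset (ZMod 51)) : Finset (Finset Pt) :=
  (Finset.univ : Finset (ZMod 51)).biUnion fun t =>
    (starter A).image fun b => b.image (Option.map (· + t))

namespace BZ


def Binf : Finset Pt := {some 0, some 17, some 34, none}

def fA (A : Fin 4 → Finset (ZMod 51)) (i : Fin 4) (t : ZMod 51) : Finset Pt :=
  (A i).image fun a => some (a + t)

def tr (t : ZMod 51) (b : Finset Pt) : Finset Pt := b.image (Option.map (· + t))

lemma tr_Binf (t : ZMod 51) : tr t Binf = {some t, some (17 + t), some (34 + t), none} := by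
  simp [tr, Binf, Finset.image_insert]

lemma tr_fA (A : Fin 4 → Finset (ZMod 51)) (i : Fin 4) (s t : ZMod 51) :
    tr t (fA A i s) = fA A i (s + t) := by
  simp only [tr, fA, Finset.image_image]
  congr 1; funext a; simp [add_assoc]

lemma mem_starter {A : Fin 4 → Finset (ZMod 51)} {b : Finset Pt} :
    b ∈ starter A ↔ b = Binf ∨ ∃ i : Fin 4, ∃ j : Fin 3, b = fA A i (17 * ((j : ℕ) : ZMod 51)) := by
  simp only [starter, Finset.mem_insert, Finset.mem_image, Finset.mem_univ, true_and]
  constructor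
  · rintro (h | ⟨⟨i, j⟩, h⟩)
    · exact Or.inl h
    · exact Or.inr ⟨i, j, h.symm⟩
  · rintro (h | ⟨i, j, h⟩)
    · exact Or.inl h
    · exact Or.inr ⟨⟨i, j⟩, h.symm⟩

lemma mem_blocks {A : Fin 4 → Finset (ZMod 51)} {b : Finset Pt} :
    b ∈ blocks A ↔ (∃ t, b = tr t Binf) ∨ ∃ i t, b = fA A i t := by
  have : blocks A = (Finset.univ : Finset (ZMod 51)).biUnion fun t =>
      (starter A).image (tr t) := rfl
  rw [this]
  simp only [Finset.mem_biUnion, Finset.mem_univ, true_and, Finset.mem_image]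
  constructor
  · rintro ⟨t, s, hs, rfl⟩
    rcases mem_starter.1 hs with rfl | ⟨i, j, rfl⟩
    · exact Or.inl ⟨t, rfl⟩
    · exact Or.inr ⟨i, _, tr_fA A i _ t⟩
  · rintro (⟨t, rfl⟩ | ⟨i, t, rfl⟩)
    · exact ⟨t, Binf, mem_starter.2 (Or.inl rfl), rfl⟩
    · refine ⟨t, fA A i (17 * ((0 : Fin 3) : ℕ) : ZMod 51), mem_starter.2 (Or.inr ⟨i, 0, rfl⟩), ?_⟩
      rw [tr_fA]; norm_num



variable {A : Fin 4 → Finset (ZMod 51)}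

def cast17 : ZMod 51 →+* ZMod 17 := ZMod.castHom (show (17:ℕ) ∣ 51 by norm_num) (ZMod 17)

section diff
variable (hcard : ∀ i, (A i).card = 4)
  (hdiff : ∀ d : ZMod 51, d ≠ 0 → d ≠ 17 → d ≠ 34 →
      ∃ i, ∃ a ∈ A i, ∃ b ∈ A i, a - b = d)

/-- the sigma set of ordered pairs of distinct elements of the same `A i` -/
def S (A : Fin 4 → Finset (ZMod 51)) : Finset ((_ : Fin 4) × (ZMod 51 × ZMod 51)) :=
  Finset.univ.sigma fun i => (A i).offDiag

def df : ((_ : Fin 4) × (ZMod 51 × ZMod 51)) → ZMod 51 := fun p => p.2.1 - p.2.2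

include hcard hdiff

lemma S_inj : Set.InjOn df (S A) ∧
    (S A).image df = (Finset.univ : Finset (ZMod 51)) \ {0, 17, 34} := by
  have hS : (S A).card = 48 := by
    simp [S, Finset.card_sigma, Finset.offDiag_card, hcard]
  have hTcard : ((Finset.univ : Finset (ZMod 51)) \ {0, 17, 34}).card = 48 := by decide
  have hsub : (Finset.univ : Finset (ZMod 51)) \ {0, 17, 34} ⊆ (S A).image df := by
    intro d hd
    simp only [Finset.mem_sdiff, Finset.mem_insert, Finset.mem_singleton, not_or] at hd
    obtain ⟨-, h0, h17, h34⟩ := hd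
    obtain ⟨i, a, ha, b, hb, hab⟩ := hdiff d h0 h17 h34
    refine Finset.mem_image.2 ⟨⟨i, (a, b)⟩, ?_, hab⟩
    refine Finset.mem_sigma.2 ⟨Finset.mem_univ _, Finset.mem_offDiag.2 ⟨ha, hb, ?_⟩⟩
    intro hEq
    exact h0 (by rw [← hab, show a = b from hEq, sub_self])
  have hle : ((S A).image df).card ≤ 48 := hS ▸ Finset.card_image_le
  have heq : (S A).image df = (Finset.univ : Finset (ZMod 51)) \ {0, 17, 34} :=
    (Finset.eq_of_subset_of_card_le hsub (by rw [hTcard]; exact hle)).symm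
  refine ⟨Finset.injOn_of_card_image_eq ?_, heq⟩
  rw [heq, hTcard, hS]

lemma key1 {i : Fin 4} {a b : ZMod 51} (ha : a ∈ A i) (hb : b ∈ A i) (hne : a ≠ b) :
    a - b ≠ 0 ∧ a - b ≠ 17 ∧ a - b ≠ 34 := by
  have h := (S_inj hcard hdiff).2
  have hm : a - b ∈ (S A).image df :=
    Finset.mem_image.2 ⟨⟨i, (a, b)⟩,
      Finset.mem_sigma.2 ⟨Finset.mem_univ _, Finset.mem_offDiag.2 ⟨ha, hb, hne⟩⟩, rfl⟩
  rw [h] at hm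
  simp only [Finset.mem_sdiff, Finset.mem_insert, Finset.mem_singleton, not_or] at hm
  exact hm.2

lemma key2 {i j : Fin 4} {a b c d : ZMod 51} (ha : a ∈ A i) (hb : b ∈ A i)
    (hc : c ∈ A j) (hd : d ∈ A j) (hab : a ≠ b) (hcd : c ≠ d) (h : a - b = c - d) :
    i = j ∧ a = c ∧ b = d := by
  have hinj := (S_inj hcard hdiff).1
  have h1 : (⟨i, (a, b)⟩ : (_ : Fin 4) × (ZMod 51 × ZMod 51)) ∈ (S A : Set _) :=
    Finset.mem_sigma.2 ⟨Finset.mem_univ _, Finset.mem_offDiag.2 ⟨ha, hb, hab⟩⟩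
  have h2 : (⟨j, (c, d)⟩ : (_ : Fin 4) × (ZMod 51 × ZMod 51)) ∈ (S A : Set _) :=
    Finset.mem_sigma.2 ⟨Finset.mem_univ _, Finset.mem_offDiag.2 ⟨hc, hd, hcd⟩⟩
  have heq := hinj h1 h2 h
  obtain ⟨h1, h2⟩ := Sigma.ext_iff.1 heq
  simp only at h1
  subst h1
  have := eq_of_heq h2
  simp only [Prod.mk.injEq] at this
  exact ⟨rfl, this⟩

end diff

section mod17
variable (hcard : ∀ i, (A i).card = 4)
  (hunion : (A 0 ∪ A 1 ∪ A 2 ∪ A 3).image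
        (ZMod.castHom (show (17:ℕ) ∣ 51 by norm_num) (ZMod 17)) =
      Finset.univ \ {0})

def W (A : Fin 4 → Finset (ZMod 51)) : Finset ((_ : Fin 4) × ZMod 51) :=
  Finset.univ.sigma fun i => A i

def gc : ((_ : Fin 4) × ZMod 51) → ZMod 17 := fun w => cast17 w.2

include hcard hunion

lemma W_inj : Set.InjOn gc (W A) ∧
    (W A).image gc = (Finset.univ : Finset (ZMod 17)) \ {0} := by
  have hW : (W A).card = 16 := by simp [W, Finset.card_sigma, hcard]
  have himg : (W A).image gc = (A 0 ∪ A 1 ∪ A 2 ∪ A 3).image cast17 := by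
    ext z
    simp only [Finset.mem_image, W, Finset.mem_sigma, Finset.mem_univ, true_and,
      Finset.mem_union, gc]
    constructor
    · rintro ⟨⟨i, a⟩, ha, rfl⟩
      exact ⟨a, by fin_cases i <;> simp_all, rfl⟩
    · rintro ⟨a, ha, rfl⟩
      rcases ha with ((h | h) | h) | h
      exacts [⟨⟨0, a⟩, h, rfl⟩, ⟨⟨1, a⟩, h, rfl⟩, ⟨⟨2, a⟩, h, rfl⟩, ⟨⟨3, a⟩, h, rfl⟩]
  have heq : (W A).image gc = (Finset.univ : Finset (ZMod 17)) \ {0} := by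
    rw [himg]; exact hunion
  have hTcard : ((Finset.univ : Finset (ZMod 17)) \ {0}).card = 16 := by decide
  refine ⟨Finset.injOn_of_card_image_eq ?_, heq⟩
  rw [heq, hTcard, hW]

lemma key3 {i j : Fin 4} {a b : ZMod 51} (ha : a ∈ A i) (hb : b ∈ A j)
    (h : cast17 a = cast17 b) : i = j ∧ a = b := by
  have hinj := (W_inj hcard hunion).1
  have h1 : (⟨i, a⟩ : (_ : Fin 4) × ZMod 51) ∈ (W A : Set _) :=
    Finset.mem_sigma.2 ⟨Finset.mem_univ _, ha⟩
  have h2 : (⟨j, b⟩ : (_ : Fin 4) × ZMod 51) ∈ (W A : Set _) :=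
    Finset.mem_sigma.2 ⟨Finset.mem_univ _, hb⟩
  have heq := hinj h1 h2 h
  obtain ⟨h1, h2⟩ := Sigma.ext_iff.1 heq
  simp only at h1
  subst h1
  exact ⟨rfl, eq_of_heq h2⟩

lemma key4 {i : Fin 4} {a : ZMod 51} (ha : a ∈ A i) : cast17 a ≠ 0 := by
  have h := (W_inj hcard hunion).2
  have hm : cast17 a ∈ (W A).image gc :=
    Finset.mem_image.2 ⟨⟨i, a⟩, Finset.mem_sigma.2 ⟨Finset.mem_univ _, ha⟩, rfl⟩
  rw [h] at hm
  simpa using (Finset.mem_sdiff.1 hm).2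

end mod17




lemma tr_tr (s t : ZMod 51) (b : Finset Pt) : tr t (tr s b) = tr (s + t) b := by
  simp only [tr, Finset.image_image]
  congr 1; funext x; cases x <;> simp [add_assoc]

lemma tr17 (t : ZMod 51) : tr (17 + t) Binf = tr t Binf := by
  rw [← tr_tr 17 t Binf, show tr 17 Binf = Binf from by decide]

lemma tr34 (t : ZMod 51) : tr (34 + t) Binf = tr t Binf := by
  rw [← tr_tr 34 t Binf, show tr 34 Binf = Binf from by decide]

lemma mem_tr_Binf {u t : ZMod 51} :
    some u ∈ tr t Binf ↔ u = t ∨ u = 17 + t ∨ u = 34 + t := by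
  rw [tr_Binf]; simp

lemma none_mem_tr_Binf (t : ZMod 51) : none ∈ tr t Binf := by rw [tr_Binf]; simp

lemma mem_tr_some {u t : ZMod 51} {b : Finset Pt} :
    some u ∈ tr t b ↔ some (u - t) ∈ b := by
  constructor
  · intro h
    obtain ⟨x, hx, hx2⟩ := Finset.mem_image.1 h
    cases x with
    | none => simp at hx2
    | some w =>
      simp only [Option.map_some, Option.some.injEq] at hx2
      rwa [show u - t = w from by rw [← hx2]; ring]
  · intro h
    exact Finset.mem_image.2 ⟨some (u - t), h, by simp⟩

lemma none_mem_tr {t : ZMod 51} {b : Finset Pt} : none ∈ tr t b ↔ none ∈ b := by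
  constructor
  · intro h
    obtain ⟨x, hx, hx2⟩ := Finset.mem_image.1 h
    cases x with
    | none => exact hx
    | some w => simp at hx2
  · intro h
    exact Finset.mem_image.2 ⟨none, h, rfl⟩


lemma mem_fA {A : Fin 4 → Finset (ZMod 51)} {u s : ZMod 51} {i : Fin 4} :
    some u ∈ fA A i s ↔ ∃ a ∈ A i, a + s = u := by
  simp [fA]

lemma none_notMem_fA {A : Fin 4 → Finset (ZMod 51)} {s : ZMod 51} {i : Fin 4} :
    none ∉ fA A i s := by simp [fA]

lemma mem_tr_Binf' {u t : ZMod 51} :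
    some u ∈ tr t Binf ↔ ∃ c ∈ ({0, 17, 34} : Finset (ZMod 51)), u = c + t := by
  rw [mem_tr_Binf]
  constructor
  · rintro (rfl | rfl | rfl)
    exacts [⟨0, by simp⟩, ⟨17, by simp⟩, ⟨34, by simp⟩]
  · rintro ⟨c, hc, rfl⟩
    fin_cases hc <;> simp

lemma ccdiff : ∀ c c' : ZMod 51, c ∈ ({0, 17, 34} : Finset (ZMod 51)) →
    c' ∈ ({0, 17, 34} : Finset (ZMod 51)) → c - c' = 0 ∨ c - c' = 17 ∨ c - c' = 34 := by
  decide

section main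
variable {A : Fin 4 → Finset (ZMod 51)}
variable (hcard : ∀ i, (A i).card = 4)
  (hdiff : ∀ d : ZMod 51, d ≠ 0 → d ≠ 17 → d ≠ 34 →
      ∃ i, ∃ a ∈ A i, ∃ b ∈ A i, a - b = d)

include hcard hdiff

lemma helperA {t t' u : ZMod 51} (h1 : some u ∈ tr t Binf) (h2 : some u ∈ tr t' Binf) :
    tr t Binf = tr t' Binf := by
  obtain ⟨c, hc, rfl⟩ := mem_tr_Binf'.1 h1
  obtain ⟨c', hc', he⟩ := mem_tr_Binf'.1 h2
  have ht' : t' = (c - c') + t := by linear_combination -he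
  rcases ccdiff c c' hc hc' with h | h | h <;> rw [ht', h]
  · rw [zero_add]
  · rw [tr17]
  · rw [tr34]

lemma helperB {t s u v : ZMod 51} {i : Fin 4} (huv : u ≠ v)
    (h1 : some u ∈ tr t Binf) (h2 : some v ∈ tr t Binf)
    (h3 : some u ∈ fA A i s) (h4 : some v ∈ fA A i s) : False := by
  obtain ⟨c, hc, rfl⟩ := mem_tr_Binf'.1 h1
  obtain ⟨c', hc', rfl⟩ := mem_tr_Binf'.1 h2
  obtain ⟨a, ha, hau⟩ := mem_fA.1 h3
  obtain ⟨b, hb, hbv⟩ := mem_fA.1 h4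
  have hab : a ≠ b := by rintro rfl; exact huv (by linear_combination hbv - hau)
  have hd : a - b = c - c' := by linear_combination hau - hbv
  have hcc' : c - c' ≠ 0 := by
    intro h; exact huv (by linear_combination h)
  obtain ⟨-, h17, h34⟩ := key1 hcard hdiff ha hb hab
  rcases ccdiff c c' hc hc' with h | h | h
  · exact hcc' h
  · exact h17 (hd.trans h)
  · exact h34 (hd.trans h)

lemma helperC {s s' u v : ZMod 51} {i i' : Fin 4} (huv : u ≠ v)
    (h1 : some u ∈ fA A i s) (h2 : some v ∈ fA A i s)
    (h3 : some u ∈ fA A i' s') (h4 : some v ∈ fA A i' s') :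
    fA A i s = fA A i' s' := by
  obtain ⟨a, ha, hau⟩ := mem_fA.1 h1
  obtain ⟨b, hb, hbv⟩ := mem_fA.1 h2
  obtain ⟨a', ha', hau'⟩ := mem_fA.1 h3
  obtain ⟨b', hb', hbv'⟩ := mem_fA.1 h4
  have hab : a ≠ b := by rintro rfl; exact huv (by linear_combination hbv - hau)
  have hab' : a' ≠ b' := by rintro rfl; exact huv (by linear_combination hbv' - hau')
  have hd : a - b = a' - b' := by linear_combination hau - hbv - hau' + hbv'
  obtain ⟨rfl, rfl, rfl⟩ := key2 hcard hdiff ha hb ha' hb' hab hab' hd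
  have : s = s' := by linear_combination hau - hau'
  rw [this]

lemma block_uniq {b b' : Finset Pt} (hb : b ∈ blocks A) (hb' : b' ∈ blocks A)
    {x y : Pt} (hxy : x ≠ y) (hxb : x ∈ b) (hyb : y ∈ b) (hxb' : x ∈ b')
    (hyb' : y ∈ b') : b = b' := by
  -- reduce to a common finite point, plus possibly ∞
  rcases mem_blocks.1 hb with ⟨t, rfl⟩ | ⟨i, s, rfl⟩ <;>
    rcases mem_blocks.1 hb' with ⟨t', rfl⟩ | ⟨i', s', rfl⟩
  · -- both Binf translates: find a common some
    obtain ⟨u, h1, h2⟩ : ∃ u, some u ∈ tr t Binf ∧ some u ∈ tr t' Binf := by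
      cases x with
      | none =>
        cases y with
        | none => exact absurd rfl hxy
        | some v => exact ⟨v, hyb, hyb'⟩
      | some u => exact ⟨u, hxb, hxb'⟩
    exact helperA hcard hdiff h1 h2
  · -- Binf translate vs A-block: impossible
    exfalso
    cases x with
    | none => exact none_notMem_fA hxb'
    | some u =>
      cases y with
      | none => exact none_notMem_fA hyb'
      | some v =>
        exact helperB hcard hdiff (fun h => hxy (by rw [h])) hxb hyb hxb' hyb'
  · exfalso
    cases x with
    | none => exact none_notMem_fA hxb
    | some u =>
      cases y with
      | none => exact none_notMem_fA hyb
      | some v =>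
        exact helperB hcard hdiff (fun h => hxy (by rw [h])) hxb' hyb' hxb hyb
  · cases x with
    | none => exact absurd hxb none_notMem_fA
    | some u =>
      cases y with
      | none => exact absurd hyb none_notMem_fA
      | some v =>
        exact helperC hcard hdiff (fun h => hxy (by rw [h])) hxb hyb hxb' hyb'

set_option maxRecDepth 4000 in
lemma block_exists (x y : Pt) (hxy : x ≠ y) : ∃ b, b ∈ blocks A ∧ x ∈ b ∧ y ∈ b := by
  have hBi : ∀ v : ZMod 51, ∃ b, b ∈ blocks A ∧ (none : Pt) ∈ b ∧ some v ∈ b := by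
    intro v
    exact ⟨tr v Binf, mem_blocks.2 (Or.inl ⟨v, rfl⟩), none_mem_tr_Binf v,
      mem_tr_Binf'.2 ⟨0, by simp, by ring⟩⟩
  cases x with
  | none =>
    cases y with
    | none => exact absurd rfl hxy
    | some v => exact hBi v
  | some u =>
    cases y with
    | none =>
      obtain ⟨b, h1, h2, h3⟩ := hBi u
      exact ⟨b, h1, h3, h2⟩
    | some v =>
      have huv : u ≠ v := fun h => hxy (by rw [h])
      by_cases h17 : u - v = 17
      · refine ⟨tr v Binf, mem_blocks.2 (Or.inl ⟨v, rfl⟩), ?_, ?_⟩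
        · exact mem_tr_Binf'.2 ⟨17, by simp, by linear_combination h17⟩
        · exact mem_tr_Binf'.2 ⟨0, by simp, by ring⟩
      by_cases h34 : u - v = 34
      · refine ⟨tr v Binf, mem_blocks.2 (Or.inl ⟨v, rfl⟩), ?_, ?_⟩
        · exact mem_tr_Binf'.2 ⟨34, by simp, by linear_combination h34⟩
        · exact mem_tr_Binf'.2 ⟨0, by simp, by ring⟩
      have h0 : u - v ≠ 0 := fun h => huv (by linear_combination h)
      obtain ⟨i, a, ha, b, hb, hab⟩ := hdiff (u - v) h0 h17 h34
      refine ⟨fA A i (u - a), mem_blocks.2 (Or.inr ⟨i, _, rfl⟩), ?_, ?_⟩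
      · exact mem_fA.2 ⟨a, ha, by ring⟩
      · exact mem_fA.2 ⟨b, hb, by linear_combination -hab⟩

end main
/-! ### Parallel classes -/

def Cl (A : Fin 4 → Finset (ZMod 51)) (t : ZMod 51) : Finset (Finset Pt) :=
  (starter A).image (tr t)

lemma blocks_eq_biUnion (A : Fin 4 → Finset (ZMod 51)) :
    blocks A = Finset.univ.biUnion (fun t => Cl A t) := rfl

lemma mem_Cl {A : Fin 4 → Finset (ZMod 51)} {t : ZMod 51} {b : Finset Pt} :
    b ∈ Cl A t ↔ ∃ s ∈ starter A, b = tr t s := by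
  simp only [Cl, Finset.mem_image]
  constructor
  · rintro ⟨s, hs, rfl⟩; exact ⟨s, hs, rfl⟩
  · rintro ⟨s, hs, rfl⟩; exact ⟨s, hs, rfl⟩

lemma ker17 : ∀ w : ZMod 51, cast17 w = 0 → w = 0 ∨ w = 17 ∨ w = 34 := by decide

lemma cast_17j : ∀ j : Fin 3, cast17 (17 * ((j : ℕ) : ZMod 51)) = 0 := by decide

lemma inj17 : ∀ j j' : Fin 3,
    17 * ((j : ℕ) : ZMod 51) = 17 * (((j' : Fin 3) : ℕ) : ZMod 51) → j = j' := by decide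

lemma jdiff : ∀ j j' : Fin 3, 17 * ((j : ℕ) : ZMod 51) - 17 * (((j' : Fin 3) : ℕ) : ZMod 51) = 0 ∨
    17 * ((j : ℕ) : ZMod 51) - 17 * (((j' : Fin 3) : ℕ) : ZMod 51) = 17 ∨
    17 * ((j : ℕ) : ZMod 51) - 17 * (((j' : Fin 3) : ℕ) : ZMod 51) = 34 := by decide

lemma j17succ : ∀ j : Fin 3, ∃ j' : Fin 3,
    17 * (((j' : Fin 3) : ℕ) : ZMod 51) = 17 * ((j : ℕ) : ZMod 51) + 17 := by decide

lemma mem_Binf {w : ZMod 51} : some w ∈ Binf ↔ w = 0 ∨ w = 17 ∨ w = 34 := by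
  simp [Binf]

lemma cast_Binf {w : ZMod 51} (h : some w ∈ Binf) : cast17 w = 0 := by
  rcases mem_Binf.1 h with rfl | rfl | rfl <;> decide

section classes
variable {A : Fin 4 → Finset (ZMod 51)}
variable (hcard : ∀ i, (A i).card = 4)
  (hdiff : ∀ d : ZMod 51, d ≠ 0 → d ≠ 17 → d ≠ 34 →
      ∃ i, ∃ a ∈ A i, ∃ b ∈ A i, a - b = d)
  (hunion : (A 0 ∪ A 1 ∪ A 2 ∪ A 3).image
        (ZMod.castHom (show (17:ℕ) ∣ 51 by norm_num) (ZMod 17)) =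
      Finset.univ \ {0})

omit hcard hdiff hunion

include hcard hunion in
lemma starter_disj {s s' : Finset Pt} (hs : s ∈ starter A) (hs' : s' ∈ starter A)
    {z : Pt} (hz : z ∈ s) (hz' : z ∈ s') : s = s' := by
  rcases mem_starter.1 hs with rfl | ⟨i, j, rfl⟩ <;>
    rcases mem_starter.1 hs' with rfl | ⟨i', j', rfl⟩
  · rfl
  · exfalso
    cases z with
    | none => exact none_notMem_fA hz'
    | some w =>
      obtain ⟨a, ha, haw⟩ := mem_fA.1 hz'
      have h1 : cast17 w = 0 := cast_Binf hz
      have h2 : cast17 w ≠ 0 := by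
        rw [← haw, map_add, cast_17j, add_zero]
        exact key4 hcard hunion ha
      exact h2 h1
  · exfalso
    cases z with
    | none => exact none_notMem_fA hz
    | some w =>
      obtain ⟨a, ha, haw⟩ := mem_fA.1 hz
      have h1 : cast17 w = 0 := cast_Binf hz'
      have h2 : cast17 w ≠ 0 := by
        rw [← haw, map_add, cast_17j, add_zero]
        exact key4 hcard hunion ha
      exact h2 h1
  · cases z with
    | none => exact absurd hz none_notMem_fA
    | some w =>
      obtain ⟨a, ha, haw⟩ := mem_fA.1 hz
      obtain ⟨a', ha', haw'⟩ := mem_fA.1 hz'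
      have hcast : cast17 a = cast17 a' := by
        have h := haw.trans haw'.symm
        have := congrArg cast17 h
        rwa [map_add, map_add, cast_17j, cast_17j, add_zero, add_zero] at this
      obtain ⟨rfl, rfl⟩ := key3 hcard hunion ha ha' hcast
      have hj : j = j' := by
        apply inj17
        have h := haw.trans haw'.symm
        exact add_left_cancel h
      rw [hj]

include hcard hunion in
lemma starter_cover (v : ZMod 51) : ∃ s ∈ starter A, some v ∈ s := by
  by_cases h0 : cast17 v = 0
  · exact ⟨Binf, mem_starter.2 (Or.inl rfl), mem_Binf.2 (ker17 v h0)⟩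
  · have hv : cast17 v ∈ (Finset.univ : Finset (ZMod 17)) \ {0} := by
      simp [h0]
    rw [← (W_inj hcard hunion).2] at hv
    obtain ⟨⟨i, a⟩, hw, hca⟩ := Finset.mem_image.1 hv
    have ha : a ∈ A i := (Finset.mem_sigma.1 hw).2
    have hker : cast17 (v - a) = 0 := by
      have hca' : cast17 a = cast17 v := hca
      rw [map_sub, hca']; exact sub_self _
    have : ∃ j : Fin 3, v - a = 17 * ((j : ℕ) : ZMod 51) := by
      rcases ker17 _ hker with h | h | h
      · exact ⟨0, by rw [h]; decide⟩
      · exact ⟨1, by rw [h]; decide⟩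
      · exact ⟨2, by rw [h]; decide⟩
    obtain ⟨j, hj⟩ := this
    exact ⟨fA A i (17 * ((j : ℕ) : ZMod 51)), mem_starter.2 (Or.inr ⟨i, j, rfl⟩),
      mem_fA.2 ⟨a, ha, by linear_combination -hj⟩⟩

lemma Cl_sub (t : ZMod 51) : Cl A (t + 17) ⊆ Cl A t := by
  intro b hb
  obtain ⟨s, hs, rfl⟩ := mem_Cl.1 hb
  rcases mem_starter.1 hs with rfl | ⟨i, j, rfl⟩
  · rw [show t + 17 = 17 + t from add_comm _ _, tr17]
    exact mem_Cl.2 ⟨Binf, mem_starter.2 (Or.inl rfl), rfl⟩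
  · obtain ⟨j', hj'⟩ := j17succ j
    refine mem_Cl.2 ⟨fA A i (17 * ((j' : ℕ) : ZMod 51)), mem_starter.2 (Or.inr ⟨i, j', rfl⟩), ?_⟩
    rw [tr_fA, tr_fA]
    congr 1
    linear_combination -hj'

lemma Cl_eq17 (t : ZMod 51) : Cl A (t + 17) = Cl A t := by
  refine Finset.Subset.antisymm (Cl_sub t) ?_
  have h51 : (51 : ZMod 51) = 0 := by decide
  have h : t = ((t + 17) + 17) + 17 := by linear_combination -h51
  nth_rewrite 1 [h]
  exact (Cl_sub _).trans ((Cl_sub _).trans (by rfl))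

lemma Cl_mod {c : ZMod 51} (hc : c = 0 ∨ c = 17 ∨ c = 34) (t : ZMod 51) :
    Cl A (c + t) = Cl A t := by
  rcases hc with rfl | rfl | rfl
  · rw [zero_add]
  · rw [add_comm, Cl_eq17]
  · rw [show (34 : ZMod 51) + t = (t + 17) + 17 from by ring,
      Cl_eq17, Cl_eq17]

include hcard hdiff in
lemma fA_inj {i i' : Fin 4} {c c' : ZMod 51} (h : fA A i c = fA A i' c') :
    i = i' ∧ c = c' := by
  obtain ⟨a, ha, b, hb, hab⟩ := Finset.one_lt_card.1 (by rw [hcard i]; norm_num)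
  have h1 : some (a + c) ∈ fA A i' c' := h ▸ mem_fA.2 ⟨a, ha, rfl⟩
  have h2 : some (b + c) ∈ fA A i' c' := h ▸ mem_fA.2 ⟨b, hb, rfl⟩
  obtain ⟨a', ha', haa⟩ := mem_fA.1 h1
  obtain ⟨b', hb', hbb⟩ := mem_fA.1 h2
  have hab' : a' ≠ b' := by
    rintro rfl
    exact hab (by linear_combination hbb - haa)
  have hd : a - b = a' - b' := by linear_combination -haa + hbb
  obtain ⟨rfl, rfl, rfl⟩ := key2 hcard hdiff ha hb ha' hb' hab hab' hd
  exact ⟨rfl, by linear_combination -haa⟩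

include hcard hdiff in
lemma class_unique {t t' : ZMod 51} {b : Finset Pt} (h : b ∈ Cl A t) (h' : b ∈ Cl A t') :
    Cl A t = Cl A t' := by
  obtain ⟨s, hs, rfl⟩ := mem_Cl.1 h
  obtain ⟨s', hs', heq⟩ := mem_Cl.1 h'
  rcases mem_starter.1 hs with rfl | ⟨i, j, rfl⟩ <;>
    rcases mem_starter.1 hs' with rfl | ⟨i', j', rfl⟩
  · have h1 : some t ∈ tr t Binf := mem_tr_Binf.2 (Or.inl rfl)
    rw [heq] at h1
    obtain ⟨c, hc, ht⟩ := mem_tr_Binf'.1 h1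
    rw [ht, Cl_mod (by simpa using hc)]
  · exfalso
    have h1 : (none : Pt) ∈ tr t Binf := none_mem_tr_Binf t
    rw [heq] at h1
    rw [tr_fA] at h1
    exact none_notMem_fA h1
  · exfalso
    have h1 : (none : Pt) ∈ tr t' Binf := none_mem_tr_Binf t'
    rw [← heq, tr_fA] at h1
    exact none_notMem_fA h1
  · rw [tr_fA, tr_fA] at heq
    obtain ⟨rfl, hc⟩ := fA_inj hcard hdiff heq
    have ht : t = (17 * ((j' : ℕ) : ZMod 51) - 17 * ((j : ℕ) : ZMod 51)) + t' := by
      linear_combination hc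
    rw [ht, Cl_mod (jdiff j' j)]

include hcard hunion in
lemma class_partition (t : ZMod 51) (x : Pt) : ∃! b, b ∈ Cl A t ∧ x ∈ b := by
  cases x with
  | none =>
    refine ⟨tr t Binf, ⟨mem_Cl.2 ⟨Binf, mem_starter.2 (Or.inl rfl), rfl⟩,
      none_mem_tr_Binf t⟩, ?_⟩
    rintro b ⟨hb, hnb⟩
    obtain ⟨s, hs, rfl⟩ := mem_Cl.1 hb
    have : (none : Pt) ∈ s := none_mem_tr.1 hnb
    rcases mem_starter.1 hs with rfl | ⟨i, j, rfl⟩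
    · rfl
    · exact absurd this none_notMem_fA
  | some u =>
    obtain ⟨s, hs, hus⟩ := starter_cover hcard hunion (u - t)
    refine ⟨tr t s, ⟨mem_Cl.2 ⟨s, hs, rfl⟩, mem_tr_some.2 hus⟩, ?_⟩
    rintro b ⟨hb, hub⟩
    obtain ⟨s', hs', rfl⟩ := mem_Cl.1 hb
    have h2 : some (u - t) ∈ s' := mem_tr_some.1 hub
    rw [starter_disj hcard hunion hs' hs h2 hus]

end classes
/-! ### Automorphism -/

lemma sigma_pow (n : ℕ) (x : ZMod 51) :
    ((Equiv.optionCongr (Equiv.addRight (1 : ZMod 51))) ^ n) (some x) = some (x + n) := by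
  induction n with
  | zero => simp
  | succ n ih =>
    rw [pow_succ', Equiv.Perm.mul_apply, ih]
    simp only [Equiv.optionCongr_apply, Option.map_some, Equiv.coe_addRight]
    congr 1
    push_cast
    ring

lemma sigma_pow_none (n : ℕ) :
    ((Equiv.optionCongr (Equiv.addRight (1 : ZMod 51))) ^ n) none = none := by
  induction n with
  | zero => simp
  | succ n ih => rw [pow_succ', Equiv.Perm.mul_apply]; simp [ih]

lemma sigma_order : orderOf (Equiv.optionCongr (Equiv.addRight (1 : ZMod 51))) = 51 := by
  rw [orderOf_eq_iff (by norm_num : (0:ℕ) < 51)]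
  constructor
  · ext x
    cases x with
    | none => rw [sigma_pow_none]; rfl
    | some u =>
      rw [sigma_pow]
      simp [show ((51:ℕ) : ZMod 51) = 0 from by decide, show (51 : ZMod 51) = 0 from by decide]
  · intro m hm hm0 h
    have h2 := congrArg (fun f : Equiv.Perm Pt => f (some 0)) h
    simp only [sigma_pow, Equiv.Perm.one_apply, zero_add, Option.some.injEq] at h2
    rw [ZMod.natCast_eq_zero_iff] at h2
    omega

lemma sigma_coe : ⇑(Equiv.optionCongr (Equiv.addRight (1 : ZMod 51))) =
    Option.map (· + (1 : ZMod 51)) := by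
  funext x; cases x <;> simp

end BZ

/-- Buratti–Zuanni construction: if every element of ℤ₅₁ \ {0,17,34} is a
difference of two elements of the same Aᵢ and A₁ ∪ A₂ ∪ A₃ ∪ A₄ reduces
modulo 17 to ℤ₁₇ \ {0}, then the translates of the starter parallel class
form a resolvable 2-(52,4,1) design admitting an automorphism of order 51
fixing ∞. -/
theorem one_rotational_construction (A : Fin 4 → Finset (ZMod 51))
    (hcard : ∀ i, (A i).card = 4)
    (hdiff : ∀ d : ZMod 51, d ≠ 0 → d ≠ 17 → d ≠ 34 →
      ∃ i, ∃ a ∈ A i, ∃ b ∈ A i, a - b = d)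
    (hunion : (A 0 ∪ A 1 ∪ A 2 ∪ A 3).image
        (ZMod.castHom (show (17:ℕ) ∣ 51 by norm_num) (ZMod 17)) =
      Finset.univ \ {0}) :
    -- it is a 2-(52,4,1) design on the 52 points ℤ₅₁ ∪ {∞}
    (∀ b ∈ blocks A, b.card = 4) ∧
    (∀ x y : Pt, x ≠ y → ∃! b, b ∈ blocks A ∧ x ∈ b ∧ y ∈ b) ∧
    -- it is resolvable
    (∃ R : Finset (Finset (Finset Pt)),
      (∀ C ∈ R, C ⊆ blocks A ∧ ∀ x : Pt, ∃! b, b ∈ C ∧ x ∈ b) ∧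
      (∀ b ∈ blocks A, ∃! C, C ∈ R ∧ b ∈ C)) ∧
    -- x ↦ x + 1 on ℤ₅₁, fixing ∞, is an automorphism of order 51
    (let σ : Equiv.Perm Pt := Equiv.optionCongr (Equiv.addRight (1 : ZMod 51))
     orderOf σ = 51 ∧ σ none = none ∧
       ∀ b ∈ blocks A, b.image σ ∈ blocks A) := by
  refine ⟨?_, ?_, ?_, ?_⟩
  · -- all blocks have cardinality 4
    intro b hb
    rcases BZ.mem_blocks.1 hb with ⟨t, rfl⟩ | ⟨i, t, rfl⟩
    · show (BZ.Binf.image (Option.map (· + t))).card = 4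
      rw [Finset.card_image_of_injective _ (Option.map_injective (add_left_injective t))]
      decide
    · show ((A i).image fun a => some (a + t)).card = 4
      rw [Finset.card_image_of_injective, hcard i]
      intro a b h
      simp only [Option.some.injEq] at h
      exact add_right_cancel h
  · -- every pair of points is in a unique block
    intro x y hxy
    obtain ⟨b, hb⟩ := BZ.block_exists hcard hdiff x y hxy
    exact ⟨b, hb, fun b' hb' =>
      BZ.block_uniq hcard hdiff hb'.1 hb.1 hxy hb'.2.1 hb'.2.2 hb.2.1 hb.2.2⟩
  · -- resolvability
    refine ⟨Finset.univ.image (fun t => BZ.Cl A t), ?_, ?_⟩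
    · intro C hC
      obtain ⟨t, -, rfl⟩ := Finset.mem_image.1 hC
      refine ⟨?_, fun x => BZ.class_partition hcard hunion t x⟩
      intro b hb
      rw [BZ.blocks_eq_biUnion]
      exact Finset.mem_biUnion.2 ⟨t, Finset.mem_univ t, hb⟩
    · intro b hb
      rw [BZ.blocks_eq_biUnion] at hb
      obtain ⟨t, -, hbt⟩ := Finset.mem_biUnion.1 hb
      refine ⟨BZ.Cl A t, ⟨Finset.mem_image.2 ⟨t, Finset.mem_univ t, rfl⟩, hbt⟩, ?_⟩
      rintro C ⟨hC, hbC⟩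
      obtain ⟨t', -, rfl⟩ := Finset.mem_image.1 hC
      exact BZ.class_unique hcard hdiff hbC hbt
  · -- the automorphism
    intro σ
    refine ⟨BZ.sigma_order, rfl, ?_⟩
    intro b hb
    have hσ : ⇑σ = Option.map (· + (1 : ZMod 51)) := BZ.sigma_coe
    rcases BZ.mem_blocks.1 hb with ⟨t, rfl⟩ | ⟨i, t, rfl⟩
    · rw [hσ]
      have : (BZ.tr t BZ.Binf).image (Option.map (· + (1 : ZMod 51))) =
          BZ.tr 1 (BZ.tr t BZ.Binf) := rfl
      rw [this, BZ.tr_tr]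
      exact BZ.mem_blocks.2 (Or.inl ⟨t + 1, rfl⟩)
    · rw [hσ]
      have : (BZ.fA A i t).image (Option.map (· + (1 : ZMod 51))) =
          BZ.tr 1 (BZ.fA A i t) := rfl
      rw [this, BZ.tr_fA]
      exact BZ.mem_blocks.2 (Or.inr ⟨i, t + 1, rfl⟩)
end
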